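/- Let m ≥ 1, c ≥ 0, k ≥ 1 be integers and suppose m_1, ..., m_k are non-negative integers with Σ_{i=1}^k m_i ≤ km + c, and let C_k be a finite connected subgraph of Z^2 with exactly Σ_{i=1}^k m_i edges. If Σ_{i=1}^k m_i ≤ km − 2, then |∂C_k| ≤ 2km, i.e., if Breaker has claimed 2km distinct edges all lying in ∂C_k and has not yet claimed all of ∂C_k (so |∂C_k| ≥ 2km + 1), then Σ_{i=1}^k m_i ≥ km − 1. -/

import Mathlib

open SimpleGraph

/-- The square lattice `ℤ²`. -/
def Grid : SimpleGraph (ℤ × ℤ) where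
  Adj u v := |u.1 - v.1| + |u.2 - v.2| = 1
  symm := by refine ⟨?_⟩; intro u v h; simpa [abs_sub_comm] using h
  loopless := by refine ⟨?_⟩; intro u h; simp at h

/-- The edge boundary of a subgraph `H` of `ℤ²`: edges of the lattice not in `H`
but incident to a vertex of `H`. -/
def edgeBoundary (H : Grid.Subgraph) : Set (Sym2 (ℤ × ℤ)) :=
  {e | e ∈ Grid.edgeSet ∧ e ∉ H.edgeSet ∧ ∃ v ∈ H.verts, v ∈ e}

/-!
Double count the incidences between the vertices of `C` and the lattice edges meeting them.
Every vertex has degree 4, an edge of `C` is counted twice and a boundary edge at least once,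
so `|∂C| + 2 e(C) ≤ 4 |V(C)|`. A connected graph has `|V(C)| ≤ e(C) + 1`, hence
`|∂C| ≤ 2 e(C) + 4`, and `e(C) ≤ km - 2` forces `|∂C| ≤ 2km`.
-/

open Finset

namespace SimpleGraph

variable {V : Type*} {G : SimpleGraph V}

theorem Subgraph.Connected.ncard_verts_le_ncard_edgeSet_add_one {H : G.Subgraph}
    (hH : H.Connected) : H.verts.ncard ≤ H.edgeSet.ncard + 1 := by
  have h := hH.coe.card_vert_le_card_edgeSet_add_one
  rw [Nat.card_coe_set_eq, Nat.card_coe_set_eq] at h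
  rwa [← H.image_coe_edgeSet_coe,
    Set.ncard_image_of_injective _ (Sym2.map.injective Subtype.val_injective)]

theorem sum_degree_eq_sum_card_filter_mem [DecidableEq V] [G.LocallyFinite] (s : Finset V) :
    ∑ v ∈ s, G.degree v = ∑ e ∈ s.biUnion (G.incidenceFinset ·), #{v ∈ s | v ∈ e} := by
  refine Eq.trans ?_ (sum_card_bipartiteAbove_eq_sum_card_bipartiteBelow (r := fun v e => v ∈ e))
  refine sum_congr rfl fun v hv => ?_
  rw [← card_incidenceFinset_eq_degree]
  congr 1
  ext e
  simp only [bipartiteAbove, mem_filter, mem_biUnion, mem_incidenceFinset]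
  exact ⟨fun he => ⟨⟨v, hv, he⟩, he.2⟩, fun he => ⟨he.1.choose_spec.2.1, he.2⟩⟩

theorem Subgraph.two_le_card_filter_mem [DecidableEq V] (H : G.Subgraph) {s : Finset V} (hs : H.verts ⊆ s)
    {e : Sym2 V} (he : e ∈ H.edgeSet) : 2 ≤ #{v ∈ s | v ∈ e} := by
  induction e using Sym2.ind with
  | _ a b =>
    have hab : H.Adj a b := he
    rw [← card_pair hab.ne]
    refine card_le_card fun v hv => mem_filter.mpr ?_
    rcases mem_insert.mp hv with rfl | hv
    · exact ⟨hs hab.fst_mem, Sym2.mem_mk_left _ _⟩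
    · rw [mem_singleton.mp hv]
      exact ⟨hs hab.snd_mem, Sym2.mem_mk_right _ _⟩

theorem Subgraph.ncard_boundary_add_two_mul_ncard_edgeSet_le [G.LocallyFinite] (H : G.Subgraph)
    (hV : H.verts.Finite) :
    ((⋃ v ∈ H.verts, G.incidenceSet v) \ H.edgeSet).ncard + 2 * H.edgeSet.ncard ≤
      ∑ v ∈ hV.toFinset, G.degree v := by
  classical
  set s := hV.toFinset
  set E := s.biUnion (G.incidenceFinset ·)
  have hE : (E : Set (Sym2 V)) = ⋃ v ∈ H.verts, G.incidenceSet v := by simp [E, s]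
  have hHE : H.edgeSet ⊆ E := by
    intro e he
    induction e using Sym2.ind with
    | _ a b =>
      rw [hE, Set.mem_iUnion₂]
      exact ⟨a, H.edge_vert he, H.edgeSet_subset he, Sym2.mem_mk_left a b⟩
  have h_one : ∀ e ∈ E, 1 ≤ #{v ∈ s | v ∈ e} := by
    intro e he
    obtain ⟨v, hv, hve⟩ := mem_biUnion.mp he
    exact card_pos.mpr ⟨v, mem_filter.mpr ⟨hv, ((mem_incidenceFinset _ _ _).mp hve).2⟩⟩
  have h_diff : ((⋃ v ∈ H.verts, G.incidenceSet v) \ H.edgeSet).ncard =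
      #{e ∈ E | e ∉ H.edgeSet} := by
    rw [← hE, ← Set.ncard_coe_finset, coe_filter]
    rfl
  have h_edges : H.edgeSet.ncard = #{e ∈ E | e ∈ H.edgeSet} := by
    rw [← Set.ncard_coe_finset, coe_filter]
    exact congrArg Set.ncard (Set.ext fun e => ⟨fun he => ⟨hHE he, he⟩, And.right⟩)
  calc _ = #{e ∈ E | e ∉ H.edgeSet} • 1 + #{e ∈ E | e ∈ H.edgeSet} • 2 := by
        rw [h_diff, h_edges, smul_eq_mul, smul_eq_mul, mul_one, mul_comm]
    _ ≤ ∑ e ∈ E with e ∉ H.edgeSet, #{v ∈ s | v ∈ e} +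
          ∑ e ∈ E with e ∈ H.edgeSet, #{v ∈ s | v ∈ e} := by
        gcongr
        · exact card_nsmul_le_sum _ _ 1 fun e he => h_one e (mem_filter.mp he).1
        · exact card_nsmul_le_sum _ _ 2 fun e he =>
            H.two_le_card_filter_mem hV.coe_toFinset.symm.subset (mem_filter.mp he).2
    _ = ∑ v ∈ s, G.degree v := by
        rw [sum_filter_not_add_sum_filter, sum_degree_eq_sum_card_filter_mem]

theorem Subgraph.Connected.ncard_boundary_add_two_mul_ncard_edgeSet_le_of_isRegularOfDegree
    [G.LocallyFinite] {d : ℕ} (hG : G.IsRegularOfDegree d) {H : G.Subgraph} (hH : H.Connected)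
    (hV : H.verts.Finite) :
    ((⋃ v ∈ H.verts, G.incidenceSet v) \ H.edgeSet).ncard + 2 * H.edgeSet.ncard ≤
      d * (H.edgeSet.ncard + 1) :=
  calc _ ≤ ∑ v ∈ hV.toFinset, G.degree v := H.ncard_boundary_add_two_mul_ncard_edgeSet_le hV
    _ = d * H.verts.ncard := by
        rw [sum_congr rfl fun v _ => hG v, sum_const, smul_eq_mul, mul_comm,
          Set.ncard_eq_toFinset_card H.verts hV]
    _ ≤ _ := Nat.mul_le_mul_left d hH.ncard_verts_le_ncard_edgeSet_add_one

end SimpleGraph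

def gridNeighbors (v : ℤ × ℤ) : Finset (ℤ × ℤ) :=
  {(v.1 + 1, v.2), (v.1 - 1, v.2), (v.1, v.2 + 1), (v.1, v.2 - 1)}

theorem mem_gridNeighbors {v w : ℤ × ℤ} : w ∈ gridNeighbors v ↔ Grid.Adj v w := by
  change _ ↔ |v.1 - w.1| + |v.2 - w.2| = 1
  simp only [gridNeighbors, mem_insert, mem_singleton, Prod.ext_iff]
  rcases abs_cases (v.1 - w.1) with ⟨h1, h2⟩ | ⟨h1, h2⟩ <;>
    rcases abs_cases (v.2 - w.2) with ⟨h3, h4⟩ | ⟨h3, h4⟩ <;> omega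

theorem card_gridNeighbors (v : ℤ × ℤ) : #(gridNeighbors v) = 4 := by
  rw [gridNeighbors, card_insert_of_notMem, card_insert_of_notMem, card_insert_of_notMem,
    card_singleton] <;> simp [Prod.ext_iff] <;> omega

instance : Grid.LocallyFinite := fun v =>
  Fintype.ofFinset (gridNeighbors v) fun _ => mem_gridNeighbors

theorem grid_isRegularOfDegree_four : Grid.IsRegularOfDegree 4 := fun v => by
  rw [← card_neighborFinset_eq_degree, ← card_gridNeighbors v]
  congr 1
  ext w
  rw [mem_neighborFinset, mem_gridNeighbors]

theorem edgeBoundary_eq_biUnion_incidenceSet_diff (C : Grid.Subgraph) :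
    edgeBoundary C = (⋃ v ∈ C.verts, Grid.incidenceSet v) \ C.edgeSet := by
  ext e
  simp only [edgeBoundary, incidenceSet, Set.mem_sdiff, Set.mem_iUnion, Set.mem_ofPred_eq]
  tauto

theorem ncard_edgeBoundary_le {C : Grid.Subgraph} (hC : C.Connected) (hV : C.verts.Finite) :
    (edgeBoundary C).ncard ≤ 2 * C.edgeSet.ncard + 4 := by
  have h := hC.ncard_boundary_add_two_mul_ncard_edgeSet_le_of_isRegularOfDegree grid_isRegularOfDegree_four hV
  rw [← edgeBoundary_eq_biUnion_incidenceSet_diff] at h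
  omega

theorem maker_claims_lower_bound_general (m k : ℕ)
    (mseq : ℕ → ℕ) (C : Grid.Subgraph) (hconn : C.Connected)
    (hfin : C.verts.Finite)
    (hE : C.edgeSet.ncard = ∑ i ∈ Finset.range k, mseq i) :
    (((∑ i ∈ Finset.range k, mseq i : ℕ) : ℤ) ≤ (k : ℤ) * m - 2 →
        (edgeBoundary C).ncard ≤ 2 * k * m) ∧
    (2 * k * m + 1 ≤ (edgeBoundary C).ncard →
        (k : ℤ) * m - 1 ≤ ((∑ i ∈ Finset.range k, mseq i : ℕ) : ℤ)) := by
  have h := ncard_edgeBoundary_le hconn hfin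
  rw [hE] at h
  zify at h ⊢
  constructor <;> intro h' <;> linarith

/-- Lemma 4.10: for Maker's finite connected graph `C` with `∑ mᵢ ≤ km + c` edges,
if `∑ mᵢ ≤ km - 2` then `|∂C| ≤ 2km`; equivalently, if Breaker has claimed `2km`
boundary edges and not yet won (`|∂C| ≥ 2km + 1`), then `∑ mᵢ ≥ km - 1`. -/
theorem maker_claims_lower_bound (m c k : ℕ) (hm : 1 ≤ m) (hk : 1 ≤ k)
    (mseq : ℕ → ℕ) (C : Grid.Subgraph) (hconn : C.Connected)
    (hfin : C.verts.Finite)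
    (hE : C.edgeSet.ncard = ∑ i ∈ Finset.range k, mseq i)
    (hsum : ∑ i ∈ Finset.range k, mseq i ≤ k * m + c) :
    (((∑ i ∈ Finset.range k, mseq i : ℕ) : ℤ) ≤ (k : ℤ) * m - 2 →
        (edgeBoundary C).ncard ≤ 2 * k * m) ∧
    (2 * k * m + 1 ≤ (edgeBoundary C).ncard →
        (k : ℤ) * m - 1 ≤ ((∑ i ∈ Finset.range k, mseq i : ℕ) : ℤ)) :=
  maker_claims_lower_bound_general m k mseq C hconn hfin hE
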